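/- arXiv:1404.5554 — 4 statements merged into one kernel-verified Lean document; each statement's English description precedes it below -/
import Mathlib

section
/- Consider the Markov-modulated alternating service model with exponential preparation times. Let M ≥ 1, let P = (p_{i,j}) be an irreducible M×M stochastic matrix with stationary distribution ϖ = (ϖ_1,…,ϖ_M), let μ_1,…,μ_M > 0, and for each state i let ν_i be a probability law on [0,∞) (the service-time law in state i) with Laplace–Stieltjes transform α_i(s) = ∫ e^{−sx} ν_i(dx). Suppose (W, Z, Z', A, B) are random elements on a common probability space with W ≥ 0, Z, Z' ∈ {1,…,M}, such that: conditionally on (W, Z = i), Z' equals j with probability p_{i,j}; conditionally on Z = i, A has law ν_i and is conditionally independent of (W, Z'); conditionally on Z' = j, B is exponentially distributed with rate μ_j and is conditionally independent of (W, Z, A); and the stationarity condition holds: the pair (max(0, B − A − W), Z') has the same joint law as (W, Z). Then for every j ∈ {1,…,M}: P[W = 0, Z = j] = ϖ_j − c_j, and for every Borel set S ⊆ (0,∞), P[W ∈ S, Z = j] = ∫_S μ_j c_j e^{−μ_j x} dx, where c_j = Σ_{i=1}^M p_{i,j} · E[e^{−μ_j W} 1_{Z=i}] · α_i(μ_j).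 -/
open MeasureTheory ProbabilityTheory Real Set
open scoped ENNReal Matrix

/-!
Condition on the previous state `Z = i`: on `{Z = i, Z' = j}` the triple `(W, A, B)` has law
`p i j` times the product of the law of `W` on `{Z = i}`, of `ν i` and of `Exp(μ j)`. For
`S ⊆ (0, ∞)`, memorylessness gives `P[B - (A + W) ∈ S | A, W] = e^{-μ_j (A + W)} Exp(μ_j)(S)`,
so the stationarity of `max 0 (B - A - W)` turns into `P[W ∈ S, Z = j] = c_j Exp(μ_j)(S)`, which
is the density formula. The law of `Z` equals that of `Z'`, hence is a stationary vector of `P`,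
hence equals `ϖ` by irreducibility, and the atom `P[W = 0, Z = j] = ϖ_j - c_j` is what remains.
-/

namespace Matrix

variable {ι R : Type*} [Fintype ι] [DecidableEq ι]

theorem vecMul_pow_eq_self [Semiring R] {A : Matrix ι ι R} {v : ι → R} (hv : v ᵥ* A = v)
    (n : ℕ) : v ᵥ* A ^ n = v := by
  induction n with
  | zero => simp
  | succ n ih => rw [pow_succ, ← vecMul_vecMul, ih, hv]

variable [Field R] [LinearOrder R] [IsStrictOrderedRing R] {A : Matrix ι ι R}

theorem IsIrreducible.pos_of_vecMul_eq_self (hA : A.IsIrreducible) {v : ι → R}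
    (hv0 : ∀ i, 0 ≤ v i) (hv : v ᵥ* A = v) {k : ι} (hk : 0 < v k) (i : ι) : 0 < v i := by
  obtain ⟨n, -, hn⟩ := (isIrreducible_iff_exists_pow_pos hA.nonneg).1 hA k i
  calc 0 < v k * (A ^ n) k i := mul_pos hk hn
    _ ≤ ∑ l, v l * (A ^ n) l i :=
      Finset.single_le_sum (fun l _ => mul_nonneg (hv0 l) (pow_apply_nonneg hA.nonneg n l i))
        (Finset.mem_univ k)
    _ = v i := congrFun (vecMul_pow_eq_self hv n) i

theorem IsIrreducible.eq_of_vecMul_eq_self (hA : A.IsIrreducible) {v w : ι → R}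
    (hw0 : ∀ i, 0 ≤ w i) (hv1 : ∑ i, v i = 1) (hw1 : ∑ i, w i = 1)
    (hv : v ᵥ* A = v) (hw : w ᵥ* A = w) : v = w := by
  obtain ⟨k₀, hk₀⟩ : ∃ k, 0 < w k := by
    by_contra! h
    have : ∑ i, w i = 0 := Finset.sum_eq_zero fun i _ => le_antisymm (h i) (hw0 i)
    simp [this] at hw1
  have hw_pos := hA.pos_of_vecMul_eq_self hw0 hw hk₀
  have : Nonempty ι := ⟨k₀⟩
  -- Subtracting from `v` the largest multiple `t • w` below it leaves a nonnegative fixed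
  -- vector with a zero coordinate, which must vanish.
  obtain ⟨k, -, hk⟩ := Finset.exists_min_image Finset.univ (fun i => v i / w i)
    Finset.univ_nonempty
  set t := v k / w k
  have hu0 : ∀ i, 0 ≤ (v - t • w) i := fun i =>
    sub_nonneg.2 ((le_div_iff₀ (hw_pos i)).1 (hk i (Finset.mem_univ i)))
  have hu : (v - t • w) ᵥ* A = v - t • w := by rw [sub_vecMul, smul_vecMul, hv, hw]
  have hvw : v = t • w := by
    funext i
    by_contra hi
    have := hA.pos_of_vecMul_eq_self hu0 hu
      (lt_of_le_of_ne (hu0 i) (Ne.symm (sub_ne_zero.2 hi))) k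
    simp [t, div_mul_cancel₀ _ (hw_pos k).ne'] at this
  have ht : t = 1 := by
    simpa [hvw, ← Finset.mul_sum, hw1] using hv1
  rw [hvw, ht, one_smul]

end Matrix

namespace ProbabilityTheory

variable {r : ℝ}

instance sFinite_expMeasure : SFinite (expMeasure r) := by
  unfold expMeasure gammaMeasure; infer_instance

theorem expMeasure_Iic (hr : 0 < r) (x : ℝ) :
    expMeasure r (Iic x) = ENNReal.ofReal (1 - exp (-r * x)) := by
  have := isProbabilityMeasure_expMeasure hr
  rw [← ofReal_cdf, cdf_expMeasure_eq hr, neg_mul]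
  split_ifs with hx
  · rfl
  · rw [ENNReal.ofReal_zero, eq_comm, ENNReal.ofReal_eq_zero, sub_nonpos, one_le_exp_iff]
    nlinarith

theorem expMeasure_Ioi_zero (hr : 0 < r) : expMeasure r (Ioi 0) = 1 := by
  have := isProbabilityMeasure_expMeasure hr
  rw [← compl_Iic, prob_compl_eq_one_sub measurableSet_Iic, expMeasure_Iic hr]
  simp

theorem expMeasure_apply {s : Set ℝ} (hs : MeasurableSet s) :
    expMeasure r s = ∫⁻ x in s, exponentialPDF r x := by
  rw [expMeasure, gammaMeasure, withDensity_apply _ hs]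
  rfl

theorem expMeasure_eq_ofReal_integral (hr : 0 < r) {s : Set ℝ} (hs : MeasurableSet s)
    (hs0 : s ⊆ Ici 0) : expMeasure r s = ENNReal.ofReal (∫ x in s, r * exp (-r * x)) := by
  have hint : IntegrableOn (fun x => r * exp (-r * x)) s :=
    (((integrableOn_Ici_iff_integrableOn_Ioi (by simp)).2 (exp_neg_integrableOn_Ioi 0 hr)).mono_set
      hs0).const_mul r
  rw [expMeasure_apply hs, ofReal_integral_eq_lintegral_ofReal hint
    (Filter.Eventually.of_forall fun x => by positivity)]
  refine setLIntegral_congr_fun hs fun x hx => ?_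
  rw [exponentialPDF_of_nonneg (hs0 hx), neg_mul]

theorem expMeasure_preimage_sub {s : Set ℝ} (hs : MeasurableSet s)
    (hs0 : s ⊆ Ioi 0) {t : ℝ} (ht : 0 ≤ t) :
    expMeasure r ((· - t) ⁻¹' s) = ENNReal.ofReal (exp (-r * t)) * expMeasure r s := by
  rw [expMeasure_apply (measurable_sub_const t hs), expMeasure_apply hs,
    ← lintegral_const_mul' _ _ ENNReal.ofReal_ne_top]
  calc ∫⁻ x in (· - t) ⁻¹' s, exponentialPDF r x
      = ∫⁻ x in (· - t) ⁻¹' s, exponentialPDF r (x - t + t) := by simp_rw [sub_add_cancel]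
    _ = ∫⁻ y in s, exponentialPDF r (y + t) :=
      (measurePreserving_sub_right volume t).setLIntegral_comp_preimage_emb
        (measurableEmbedding_subRight t) (fun y => exponentialPDF r (y + t)) s
    _ = ∫⁻ y in s, ENNReal.ofReal (exp (-r * t)) * exponentialPDF r y := by
      refine setLIntegral_congr_fun hs fun y hy => ?_
      have hy0 : 0 < y := hs0 hy
      rw [exponentialPDF_of_nonneg (by linarith), exponentialPDF_of_nonneg hy0.le,
        ← ENNReal.ofReal_mul (exp_nonneg _), ← mul_left_comm, ← exp_add]
      ring_nf

theorem lintegral_ofReal_exp_neg_mul {ν : Measure ℝ} [IsFiniteMeasure ν] (hr : 0 ≤ r)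
    (hν : ∀ᵐ x ∂ν, 0 ≤ x) :
    ∫⁻ x, ENNReal.ofReal (exp (-r * x)) ∂ν = ENNReal.ofReal (∫ x, exp (-r * x) ∂ν) := by
  refine (ofReal_integral_eq_lintegral_ofReal ?_ (.of_forall fun x => exp_nonneg _)).symm
  refine .of_bound (by fun_prop) 1 (hν.mono fun x hx => ?_)
  rw [norm_of_nonneg (exp_nonneg _), exp_le_one_iff]
  nlinarith

theorem prod_expMeasure_sub_mem {ν : Measure ℝ} (hν : ∀ᵐ a ∂ν, 0 ≤ a) {s : Set ℝ}
    (hs : MeasurableSet s) (hs0 : s ⊆ Ioi 0) :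
    ν.prod (expMeasure r) {y | y.2 - y.1 ∈ s}
      = (∫⁻ a, ENNReal.ofReal (exp (-r * a)) ∂ν) * expMeasure r s := by
  have hm : MeasurableSet {y : ℝ × ℝ | y.2 - y.1 ∈ s} := (measurable_snd.sub measurable_fst) hs
  rw [Measure.prod_apply hm, ← lintegral_mul_const _ (by fun_prop)]
  exact lintegral_congr_ae (hν.mono fun a ha => expMeasure_preimage_sub hs hs0 ha)

theorem prod_prod_expMeasure_sub_sub_mem {η ν : Measure ℝ} [SFinite ν] (hη : ∀ᵐ w ∂η, 0 ≤ w)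
    (hν : ∀ᵐ a ∂ν, 0 ≤ a) {s : Set ℝ} (hs : MeasurableSet s) (hs0 : s ⊆ Ioi 0) :
    η.prod (ν.prod (expMeasure r)) {x | x.2.2 - x.2.1 - x.1 ∈ s}
      = (∫⁻ w, ENNReal.ofReal (exp (-r * w)) ∂η) * (∫⁻ a, ENNReal.ofReal (exp (-r * a)) ∂ν)
          * expMeasure r s := by
  have hm : MeasurableSet {x : ℝ × ℝ × ℝ | x.2.2 - x.2.1 - x.1 ∈ s} :=
    ((measurable_snd.snd.sub measurable_snd.fst).sub measurable_fst) hs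
  rw [Measure.prod_apply hm, mul_assoc, ← lintegral_mul_const _ (by fun_prop)]
  refine lintegral_congr_ae (hη.mono fun w hw => ?_)
  have hsw : (· - w) ⁻¹' s ⊆ Ioi 0 := fun x hx => by
    have : 0 < x - w := hs0 hx
    simp only [mem_Ioi]; linarith
  change ν.prod (expMeasure r) {y | y.2 - y.1 ∈ (· - w) ⁻¹' s} = _
  rw [prod_expMeasure_sub_mem hν (measurable_sub_const w hs) hsw,
    expMeasure_preimage_sub hs hs0 hw]
  ring

end ProbabilityTheory

theorem iUnion_Iic_natCast_eq_univ : ⋃ n : ℕ, Iic (n : ℝ) = univ :=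
  eq_univ_of_forall fun x => mem_iUnion.2 ⟨⌈x⌉₊, Nat.le_ceil x⟩

namespace MeasureTheory.Measure

theorem ext_of_prod_prod_Iic {α β : Type*} [MeasurableSpace α] [MeasurableSpace β]
    {μ ν : Measure (α × β × ℝ)} [IsFiniteMeasure μ]
    (h : ∀ s t, MeasurableSet s → MeasurableSet t → ∀ x : ℝ,
      μ (s ×ˢ t ×ˢ Iic x) = ν (s ×ˢ t ×ˢ Iic x)) : μ = ν := by
  have hIic : MeasurableSpace.generateFrom (range (Iic : ℝ → Set ℝ)) = borel ℝ :=
    (borel_eq_generateFrom_Iic ℝ).symm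
  have hIic_span : IsCountablySpanning (range (Iic : ℝ → Set ℝ)) :=
    ⟨fun n : ℕ => Iic (n : ℝ), fun n => mem_range_self _, iUnion_Iic_natCast_eq_univ⟩
  have hgen := generateFrom_eq_prod MeasurableSpace.generateFrom_measurableSet
    (generateFrom_eq_prod MeasurableSpace.generateFrom_measurableSet hIic
      (isCountablySpanning_measurableSet (α := β)) hIic_span)
    (isCountablySpanning_measurableSet (α := α))
    (isCountablySpanning_measurableSet.prod hIic_span)
  refine ext_of_generateFrom_of_iUnion _ (fun n : ℕ => univ ×ˢ univ ×ˢ Iic (n : ℝ)) hgen.symm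
    (MeasurableSpace.isPiSystem_measurableSet.prod
      (MeasurableSpace.isPiSystem_measurableSet.prod isPiSystem_Iic))
    (by simp [iUnion_Iic_natCast_eq_univ, ← prod_iUnion])
    (fun n => mem_image2_of_mem MeasurableSet.univ
      (mem_image2_of_mem MeasurableSet.univ (mem_range_self _)))
    (fun n => measure_ne_top μ _) ?_
  rintro _ ⟨s, hs, _, ⟨t, ht, _, ⟨x, rfl⟩, rfl⟩, rfl⟩
  exact h s t hs ht x

end MeasureTheory.Measure

namespace MeasureTheory

variable {Ω : Type*} [MeasurableSpace Ω] {μ : Measure Ω}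

theorem measure_eq_sum_measure_preimage_singleton_inter {ι : Type*} [Fintype ι] {Z : Ω → ι}
    (hZ : ∀ i, MeasurableSet (Z ⁻¹' {i})) (E : Set Ω) : μ E = ∑ i, μ (Z ⁻¹' {i} ∩ E) := by
  rw [← Measure.restrict_apply_univ, ← preimage_univ (f := Z), ← Finset.coe_univ,
    ← sum_measure_preimage_singleton _ fun i _ => hZ i]
  exact Finset.sum_congr rfl fun i _ => Measure.restrict_apply (hZ i)

theorem measure_mem_and_mem_eq_of_map_eq {α β : Type*} [MeasurableSpace α] [MeasurableSpace β]
    {X X' : Ω → α} {Y Y' : Ω → β} (hX : Measurable X) (hY : Measurable Y) (hX' : Measurable X')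
    (hY' : Measurable Y') (h : μ.map (fun ω => (X ω, Y ω)) = μ.map (fun ω => (X' ω, Y' ω)))
    {s : Set α} {t : Set β} (hs : MeasurableSet s) (ht : MeasurableSet t) :
    μ {ω | X ω ∈ s ∧ Y ω ∈ t} = μ {ω | X' ω ∈ s ∧ Y' ω ∈ t} := by
  have := congrArg (· (s ×ˢ t)) h
  rwa [Measure.map_apply (hX.prodMk hY) (hs.prod ht),
    Measure.map_apply (hX'.prodMk hY') (hs.prod ht)] at this

end MeasureTheory

theorem max_zero_mem_iff {s : Set ℝ} (hs : s ⊆ Ioi 0) (x : ℝ) : max 0 x ∈ s ↔ x ∈ s := by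
  rcases le_total x 0 with hx | hx
  · rw [max_eq_left hx]
    exact ⟨fun h => (lt_irrefl (0 : ℝ) (hs h)).elim, fun h => (hx.not_gt (hs h)).elim⟩
  · rw [max_eq_right hx]

section AlternatingService

variable {Ω ι : Type*} [MeasurableSpace Ω] {Pr : Measure Ω} {W A B : Ω → ℝ} {Z Z' : Ω → ι}
  {i j : ι} {q r : ℝ} {ν : Measure ℝ}

theorem map_restrict_eq_smul_prod [IsFiniteMeasure Pr] [SFinite ν] (hW : Measurable W)
    (hA : Measurable A) (hB : Measurable B) (hr : 0 < r)
    (h : ∀ S_W S_A : Set ℝ, MeasurableSet S_W → MeasurableSet S_A → ∀ x : ℝ,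
      Pr {ω | W ω ∈ S_W ∧ Z ω = i ∧ Z' ω = j ∧ A ω ∈ S_A ∧ B ω ≤ x}
        = Pr {ω | W ω ∈ S_W ∧ Z ω = i} * ENNReal.ofReal q * ν S_A
            * ENNReal.ofReal (1 - exp (-r * x))) :
    (Pr.restrict {ω | Z ω = i ∧ Z' ω = j}).map (fun ω => (W ω, A ω, B ω))
      = ENNReal.ofReal q • ((Pr.restrict {ω | Z ω = i}).map W).prod (ν.prod (expMeasure r)) := by
  refine Measure.ext_of_prod_prod_Iic fun s t hs ht x => ?_
  have hbox := hs.prod (ht.prod (measurableSet_Iic (a := x)))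
  have hWAB : Measurable fun ω => (W ω, A ω, B ω) := hW.prodMk (hA.prodMk hB)
  rw [Measure.map_apply hWAB hbox, Measure.restrict_apply (hWAB hbox), Measure.smul_apply,
    Measure.prod_prod, Measure.prod_prod, Measure.map_apply hW hs,
    Measure.restrict_apply (hW hs), expMeasure_Iic hr, smul_eq_mul]
  have hset : (fun ω => (W ω, A ω, B ω)) ⁻¹' (s ×ˢ t ×ˢ Iic x) ∩ {ω | Z ω = i ∧ Z' ω = j}
      = {ω | W ω ∈ s ∧ Z ω = i ∧ Z' ω = j ∧ A ω ∈ t ∧ B ω ≤ x} := by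
    ext ω; simp only [mem_inter_iff, mem_preimage, mem_prod, mem_Iic, mem_ofPred_eq]; tauto
  rw [hset, h s t hs ht x]
  change _ = _ * (Pr {ω | W ω ∈ s ∧ Z ω = i} * _)
  ring

theorem measure_eq_and_eq_of_map_restrict_eq [IsProbabilityMeasure ν] (hW : Measurable W)
    (hA : Measurable A) (hB : Measurable B) (hr : 0 < r)
    (hlaw : (Pr.restrict {ω | Z ω = i ∧ Z' ω = j}).map (fun ω => (W ω, A ω, B ω))
      = ENNReal.ofReal q • ((Pr.restrict {ω | Z ω = i}).map W).prod (ν.prod (expMeasure r))) :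
    Pr {ω | Z ω = i ∧ Z' ω = j} = Pr {ω | Z ω = i} * ENNReal.ofReal q := by
  have := isProbabilityMeasure_expMeasure hr
  have := congrArg (· univ) hlaw
  rw [Measure.map_apply (hW.prodMk (hA.prodMk hB)) .univ, preimage_univ,
    Measure.restrict_apply_univ, Measure.smul_apply, ← univ_prod_univ, Measure.prod_prod,
    measure_univ (μ := ν.prod (expMeasure r)), mul_one, Measure.map_apply hW .univ, preimage_univ,
    Measure.restrict_apply_univ, smul_eq_mul] at this
  rw [this, mul_comm]

theorem measure_eq_and_sub_sub_mem_and_eq_of_map_restrict_eq [IsFiniteMeasure Pr]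
    [IsFiniteMeasure ν] (hW : Measurable W) (hA : Measurable A) (hB : Measurable B)
    (hW0 : ∀ ω, 0 ≤ W ω) (hν : ∀ᵐ a ∂ν, 0 ≤ a) (hr : 0 < r) (hq : 0 ≤ q)
    (hlaw : (Pr.restrict {ω | Z ω = i ∧ Z' ω = j}).map (fun ω => (W ω, A ω, B ω))
      = ENNReal.ofReal q • ((Pr.restrict {ω | Z ω = i}).map W).prod (ν.prod (expMeasure r)))
    {S : Set ℝ} (hS : MeasurableSet S) (hS0 : S ⊆ Ioi 0) :
    Pr {ω | Z ω = i ∧ B ω - A ω - W ω ∈ S ∧ Z' ω = j}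
      = ENNReal.ofReal (q * (∫ ω in {ω | Z ω = i}, exp (-r * W ω) ∂Pr)
          * ∫ a, exp (-r * a) ∂ν) * expMeasure r S := by
  have hE : MeasurableSet {x : ℝ × ℝ × ℝ | x.2.2 - x.2.1 - x.1 ∈ S} :=
    ((measurable_snd.snd.sub measurable_snd.fst).sub measurable_fst) hS
  have hWAB : Measurable fun ω => (W ω, A ω, B ω) := hW.prodMk (hA.prodMk hB)
  have hη : ∀ᵐ w ∂(Pr.restrict {ω | Z ω = i}).map W, 0 ≤ w :=
    (ae_map_iff hW.aemeasurable measurableSet_Ici).2 (.of_forall hW0)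
  have := congrArg (· {x : ℝ × ℝ × ℝ | x.2.2 - x.2.1 - x.1 ∈ S}) hlaw
  rw [Measure.map_apply hWAB hE, Measure.restrict_apply (hWAB hE), Measure.smul_apply,
    smul_eq_mul] at this
  have hset : {ω | Z ω = i ∧ B ω - A ω - W ω ∈ S ∧ Z' ω = j}
      = (fun ω => (W ω, A ω, B ω)) ⁻¹' {x | x.2.2 - x.2.1 - x.1 ∈ S}
        ∩ {ω | Z ω = i ∧ Z' ω = j} := by
    ext ω; simp only [mem_ofPred_eq, mem_inter_iff, mem_preimage]; tauto
  rw [hset, this,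
    prod_prod_expMeasure_sub_sub_mem hη hν hS hS0, lintegral_ofReal_exp_neg_mul hr.le hη,
    lintegral_ofReal_exp_neg_mul hr.le hν, integral_map hW.aemeasurable (by fun_prop),
    ENNReal.ofReal_mul (mul_nonneg hq (integral_nonneg fun ω => exp_nonneg _)),
    ENNReal.ofReal_mul hq]
  ring

theorem measure_eq_ofReal_of_vecMul_eq_self [IsProbabilityMeasure Pr] [Fintype ι]
    [DecidableEq ι] {P : Matrix ι ι ℝ} (hP : P.IsIrreducible) {ϖ : ι → ℝ} (hϖ0 : ∀ i, 0 ≤ ϖ i)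
    (hϖ1 : ∑ i, ϖ i = 1) (hϖ : ϖ ᵥ* P = ϖ) (hZ : ∀ i, MeasurableSet (Z ⁻¹' {i}))
    (hZZ' : ∀ j, Pr {ω | Z' ω = j} = Pr {ω | Z ω = j})
    (hjoint : ∀ i j, Pr {ω | Z ω = i ∧ Z' ω = j} = Pr {ω | Z ω = i} * ENNReal.ofReal (P i j))
    (j : ι) : Pr {ω | Z ω = j} = ENNReal.ofReal (ϖ j) := by
  set law : ι → ℝ := fun i => (Pr {ω | Z ω = i}).toReal
  have hlaw1 : ∑ i, law i = 1 := by
    have h := measure_eq_sum_measure_preimage_singleton_inter (μ := Pr) hZ univ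
    simp only [inter_univ, measure_univ] at h
    calc ∑ i, law i = (∑ i, Pr (Z ⁻¹' {i})).toReal :=
          (ENNReal.toReal_sum fun i _ => measure_ne_top Pr _).symm
      _ = 1 := by rw [← h, ENNReal.toReal_one]
  have hlaw : law ᵥ* P = law := funext fun j => by
    have h : Pr {ω | Z ω = j} = ∑ i, Pr {ω | Z ω = i} * ENNReal.ofReal (P i j) :=
      (hZZ' j).symm.trans <| (measure_eq_sum_measure_preimage_singleton_inter hZ _).trans
        (Finset.sum_congr rfl fun i _ => hjoint i j)
    calc (law ᵥ* P) j = ∑ i, law i * P i j := rfl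
      _ = law j := by
        rw [show law j = _ from congrArg ENNReal.toReal h,
          ENNReal.toReal_sum fun i _ => by finiteness]
        simp [law, ENNReal.toReal_ofReal (hP.nonneg _ j)]
  rw [← hP.eq_of_vecMul_eq_self hϖ0 hlaw1 hϖ1 hlaw hϖ, ENNReal.ofReal_toReal (measure_ne_top Pr _)]

theorem measure_mem_and_eq_of_stationary [IsFiniteMeasure Pr] [Fintype ι] {ν : ι → Measure ℝ}
    [∀ i, IsFiniteMeasure (ν i)] {p : ι → ι → ℝ} {μ : ι → ℝ} (hW : Measurable W)
    (hA : Measurable A) (hB : Measurable B) (hW0 : ∀ ω, 0 ≤ W ω)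
    (hZ : ∀ i, MeasurableSet (Z ⁻¹' {i})) (hν : ∀ i, ∀ᵐ a ∂ν i, 0 ≤ a) (hμ : 0 < μ j)
    (hp : ∀ i, 0 ≤ p i j)
    (hlaw : ∀ i, (Pr.restrict {ω | Z ω = i ∧ Z' ω = j}).map (fun ω => (W ω, A ω, B ω))
      = ENNReal.ofReal (p i j) • ((Pr.restrict {ω | Z ω = i}).map W).prod
          ((ν i).prod (expMeasure (μ j))))
    {S : Set ℝ} (hS : MeasurableSet S) (hS0 : S ⊆ Ioi 0)
    (hstat : Pr {ω | max 0 (B ω - A ω - W ω) ∈ S ∧ Z' ω = j} = Pr {ω | W ω ∈ S ∧ Z ω = j}) :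
    Pr {ω | W ω ∈ S ∧ Z ω = j}
      = ENNReal.ofReal (∑ i, p i j * (∫ ω in {ω | Z ω = i}, exp (-μ j * W ω) ∂Pr)
          * ∫ a, exp (-μ j * a) ∂ν i) * expMeasure (μ j) S := by
  simp_rw [← hstat, max_zero_mem_iff hS0]
  rw [measure_eq_sum_measure_preimage_singleton_inter hZ, ENNReal.ofReal_sum_of_nonneg
    fun i _ => mul_nonneg (mul_nonneg (hp i) (integral_nonneg fun _ => exp_nonneg _))
      (integral_nonneg fun _ => exp_nonneg _), Finset.sum_mul]
  exact Finset.sum_congr rfl fun i _ =>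
    measure_eq_and_sub_sub_mem_and_eq_of_map_restrict_eq hW hA hB hW0 (hν i) hμ (hp i)
      (hlaw i) hS hS0

theorem measure_eq_zero_and_eq [IsFiniteMeasure Pr] (hW : Measurable W) (hW0 : ∀ ω, 0 ≤ W ω)
    (hZ : MeasurableSet (Z ⁻¹' {j})) :
    Pr {ω | W ω = 0 ∧ Z ω = j} = Pr {ω | Z ω = j} - Pr {ω | W ω ∈ Ioi 0 ∧ Z ω = j} := by
  have hsplit : {ω | W ω = 0 ∧ Z ω = j} = {ω | Z ω = j} \ {ω | W ω ∈ Ioi 0 ∧ Z ω = j} := by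
    ext ω
    have := hW0 ω
    simp only [mem_ofPred_eq, mem_sdiff, mem_Ioi]
    grind
  have hm : MeasurableSet {ω | W ω ∈ Ioi 0 ∧ Z ω = j} := (hW measurableSet_Ioi).inter hZ
  rw [hsplit, measure_sdiff (s₁ := {ω | Z ω = j}) (fun _ h => h.2) hm.nullMeasurableSet
    (measure_ne_top _ _)]

end AlternatingService

theorem stmt0_general {Ω : Type*} [MeasurableSpace Ω] (Pr : Measure Ω) [IsProbabilityMeasure Pr]
    (M : ℕ)
    (p : Fin M → Fin M → ℝ) (ϖ : Fin M → ℝ) (μ : Fin M → ℝ)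
    (hp_nonneg : ∀ i j, 0 ≤ p i j)
    (h_irred : ∀ i j, ∃ n : ℕ, 0 < n ∧ 0 < ((Matrix.of p) ^ n) i j)
    (hϖ_nonneg : ∀ i, 0 ≤ ϖ i) (hϖ_sum : ∑ i, ϖ i = 1)
    (hϖ_stat : ∀ j, ∑ i, ϖ i * p i j = ϖ j)
    (hμ : ∀ j, 0 < μ j)
    (ν : Fin M → Measure ℝ) (hν : ∀ i, IsProbabilityMeasure (ν i))
    (hν_supp : ∀ i, ν i (Set.Iio 0) = 0)
    (W : Ω → ℝ) (Z Z' : Ω → Fin M) (A B : Ω → ℝ)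
    (hW : Measurable W) (hZ : Measurable Z) (hZ' : Measurable Z')
    (hA : Measurable A) (hB : Measurable B)
    (hW_nonneg : ∀ ω, 0 ≤ W ω)
    -- Joint conditional structure: given `Z = i`, `Z' = j` w.p. `p i j` (independently of
    -- `W`); given `Z = i`, `A ~ ν i`, conditionally independent of `(W, Z')`; given
    -- `Z' = j`, `B ~ Exp(μ j)`, conditionally independent of `(W, Z, A)`.
    (h_joint : ∀ (i j : Fin M) (S_W S_A : Set ℝ),
      MeasurableSet S_W → MeasurableSet S_A → ∀ x : ℝ,
      Pr {ω | W ω ∈ S_W ∧ Z ω = i ∧ Z' ω = j ∧ A ω ∈ S_A ∧ B ω ≤ x}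
        = Pr {ω | W ω ∈ S_W ∧ Z ω = i} * ENNReal.ofReal (p i j) * ν i S_A
            * ENNReal.ofReal (1 - Real.exp (-(μ j) * x)))
    -- Stationarity: `(max (0, B - A - W), Z')` has the same joint law as `(W, Z)`.
    (h_stat : Measure.map (fun ω => (max 0 (B ω - A ω - W ω), Z' ω)) Pr
        = Measure.map (fun ω => (W ω, Z ω)) Pr)
    (α : Fin M → ℝ → ℝ) (hα : ∀ i s, α i s = ∫ x, Real.exp (-s * x) ∂(ν i))
    (c : Fin M → ℝ)
    (hc : ∀ j, c j = ∑ i, p i j *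
      (∫ ω in {ω | Z ω = i}, Real.exp (-(μ j) * W ω) ∂Pr) * α i (μ j)) :
    ∀ j : Fin M,
      Pr {ω | W ω = 0 ∧ Z ω = j} = ENNReal.ofReal (ϖ j - c j)
        ∧ ∀ S : Set ℝ, MeasurableSet S → S ⊆ Set.Ioi 0 →
            Pr {ω | W ω ∈ S ∧ Z ω = j}
              = ENNReal.ofReal (∫ x in S, μ j * c j * Real.exp (-(μ j) * x)) := by
  have hZi : ∀ i, MeasurableSet (Z ⁻¹' {i}) := fun i => hZ (measurableSet_singleton i)
  have hν0 : ∀ i, ∀ᵐ a ∂ν i, 0 ≤ a := fun i => ae_iff.2 (by simp only [not_le]; exact hν_supp i)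
  have hlaw := fun i j => map_restrict_eq_smul_prod (ν := ν i) hW hA hB (hμ j) (h_joint i j)
  have hstat : ∀ j (S : Set ℝ), MeasurableSet S →
      Pr {ω | max 0 (B ω - A ω - W ω) ∈ S ∧ Z' ω = j} = Pr {ω | W ω ∈ S ∧ Z ω = j} :=
    fun j S hS => measure_mem_and_mem_eq_of_map_eq (by fun_prop) hZ' hW hZ h_stat hS
      (measurableSet_singleton j)
  have hZ_law := measure_eq_ofReal_of_vecMul_eq_self
    ((Matrix.isIrreducible_iff_exists_pow_pos hp_nonneg).2 h_irred) hϖ_nonneg hϖ_sum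
    (funext hϖ_stat) hZi (fun j => by simpa using hstat j univ .univ)
    (fun i j => measure_eq_and_eq_of_map_restrict_eq hW hA hB (hμ j) (hlaw i j))
  have hpos : ∀ j S, MeasurableSet S → S ⊆ Ioi 0 →
      Pr {ω | W ω ∈ S ∧ Z ω = j} = ENNReal.ofReal (c j) * expMeasure (μ j) S := fun j S hS hS0 => by
    simpa only [hc, hα] using measure_mem_and_eq_of_stationary hW hA hB hW_nonneg hZi hν0 (hμ j)
      (hp_nonneg · j) (hlaw · j) hS hS0 (hstat j S hS)
  intro j
  have hc0 : 0 ≤ c j := by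
    rw [hc j]
    exact Finset.sum_nonneg fun i _ => mul_nonneg (mul_nonneg (hp_nonneg i j)
      (integral_nonneg fun _ => exp_nonneg _)) (hα i _ ▸ integral_nonneg fun _ => exp_nonneg _)
  refine ⟨?_, fun S hS hS0 => ?_⟩
  · rw [measure_eq_zero_and_eq hW hW_nonneg (hZi j), hZ_law, hpos j _ measurableSet_Ioi subset_rfl,
      expMeasure_Ioi_zero (hμ j), mul_one, ENNReal.ofReal_sub _ hc0]
  · rw [hpos j S hS hS0, expMeasure_eq_ofReal_integral (hμ j) hS (hS0.trans Ioi_subset_Ici_self),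
      ← ENNReal.ofReal_mul hc0, ← integral_const_mul]
    simp_rw [mul_assoc, mul_left_comm (c j)]

/-- Markov-modulated alternating service model with exponential preparation times:
stationary waiting time `W` paired with the modulating state `Z`. For every state `j`,
`P[W = 0, Z = j] = ϖ_j - c_j` and on `(0,∞)` the (defective) law of `W` on `{Z = j}` has
density `x ↦ μ_j c_j e^{-μ_j x}`, where
`c_j = ∑_i p_{i,j} E[e^{-μ_j W}; Z = i] α_i(μ_j)`. -/
theorem stmt0 {Ω : Type*} [MeasurableSpace Ω] (Pr : Measure Ω) [IsProbabilityMeasure Pr]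
    (M : ℕ) (hM : 1 ≤ M)
    (p : Fin M → Fin M → ℝ) (ϖ : Fin M → ℝ) (μ : Fin M → ℝ)
    (hp_nonneg : ∀ i j, 0 ≤ p i j) (hp_row : ∀ i, ∑ j, p i j = 1)
    (h_irred : ∀ i j, ∃ n : ℕ, 0 < n ∧ 0 < ((Matrix.of p) ^ n) i j)
    (hϖ_nonneg : ∀ i, 0 ≤ ϖ i) (hϖ_sum : ∑ i, ϖ i = 1)
    (hϖ_stat : ∀ j, ∑ i, ϖ i * p i j = ϖ j)
    (hμ : ∀ j, 0 < μ j)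
    (ν : Fin M → Measure ℝ) (hν : ∀ i, IsProbabilityMeasure (ν i))
    (hν_supp : ∀ i, ν i (Set.Iio 0) = 0)
    (W : Ω → ℝ) (Z Z' : Ω → Fin M) (A B : Ω → ℝ)
    (hW : Measurable W) (hZ : Measurable Z) (hZ' : Measurable Z')
    (hA : Measurable A) (hB : Measurable B)
    (hW_nonneg : ∀ ω, 0 ≤ W ω)
    -- Joint conditional structure: given `Z = i`, `Z' = j` w.p. `p i j` (independently of
    -- `W`); given `Z = i`, `A ~ ν i`, conditionally independent of `(W, Z')`; given
    -- `Z' = j`, `B ~ Exp(μ j)`, conditionally independent of `(W, Z, A)`.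
    (h_joint : ∀ (i j : Fin M) (S_W S_A : Set ℝ),
      MeasurableSet S_W → MeasurableSet S_A → ∀ x : ℝ,
      Pr {ω | W ω ∈ S_W ∧ Z ω = i ∧ Z' ω = j ∧ A ω ∈ S_A ∧ B ω ≤ x}
        = Pr {ω | W ω ∈ S_W ∧ Z ω = i} * ENNReal.ofReal (p i j) * ν i S_A
            * ENNReal.ofReal (1 - Real.exp (-(μ j) * x)))
    -- Stationarity: `(max (0, B - A - W), Z')` has the same joint law as `(W, Z)`.
    (h_stat : Measure.map (fun ω => (max 0 (B ω - A ω - W ω), Z' ω)) Pr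
        = Measure.map (fun ω => (W ω, Z ω)) Pr)
    (α : Fin M → ℝ → ℝ) (hα : ∀ i s, α i s = ∫ x, Real.exp (-s * x) ∂(ν i))
    (c : Fin M → ℝ)
    (hc : ∀ j, c j = ∑ i, p i j *
      (∫ ω in {ω | Z ω = i}, Real.exp (-(μ j) * W ω) ∂Pr) * α i (μ j)) :
    ∀ j : Fin M,
      Pr {ω | W ω = 0 ∧ Z ω = j} = ENNReal.ofReal (ϖ j - c j)
        ∧ ∀ S : Set ℝ, MeasurableSet S → S ⊆ Set.Ioi 0 →
            Pr {ω | W ω ∈ S ∧ Z ω = j}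
              = ENNReal.ofReal (∫ x in S, μ j * c j * Real.exp (-(μ j) * x)) :=
  stmt0_general Pr M p ϖ μ hp_nonneg h_irred hϖ_nonneg hϖ_sum hϖ_stat hμ ν hν hν_supp W Z Z' A B hW
    hZ hZ' hA hB hW_nonneg h_joint h_stat α hα c hc
end

section
/- Let μ > 0, let Y be a nonnegative random variable, and let B be exponentially distributed with rate μ, independent of Y. Then for every s ≥ 0: E[e^{−s·max(0, B − Y)}] = 1 − (s/(μ + s))·E[e^{−μY}]. -/
/-!
Write `M = max 0 (B - Y)`. Since `1 - exp (-s M) = ∫₀^M s exp (-s t) dt`, the layer cake formula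
gives `E[1 - exp (-s M)] = ∫₀^∞ s exp (-s t) P(M > t) dt`. For `t > 0` the event `M > t` is
`B > Y + t`; conditioning on `Y` (by independence) and using the tail `P(B > x) = exp (-μ x)`
yields `P(M > t) = E[exp (-μ Y)] exp (-μ t)`, and the remaining integral is
`∫₀^∞ s exp (-(μ + s) t) dt = s / (μ + s)`.
-/

open MeasureTheory ProbabilityTheory Set Real

lemma intervalIntegral_mul_exp_neg_mul (s x : ℝ) :
    ∫ t in (0 : ℝ)..x, s * exp (-s * t) = 1 - exp (-s * x) := by
  have hderiv : ∀ t ∈ uIcc 0 x, HasDerivAt (fun u ↦ -exp (-s * u)) (s * exp (-s * t)) t :=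
    fun t _ ↦ by simpa [neg_mul] using hasDerivAt_neg_exp_mul_exp (r := s) (x := t)
  rw [intervalIntegral.integral_eq_sub_of_hasDerivAt hderiv
    ((by fun_prop : Continuous fun t ↦ s * exp (-s * t)).intervalIntegrable _ _)]
  simp only [neg_mul, mul_zero, exp_zero, sub_neg_eq_add]
  ring

lemma lintegral_Ioi_ofReal_exp_mul {a : ℝ} (ha : a < 0) (c : ℝ) :
    ∫⁻ t in Ioi c, ENNReal.ofReal (exp (a * t)) = ENNReal.ofReal (-exp (a * c) / a) := by
  rw [← integral_exp_mul_Ioi ha, ofReal_integral_eq_lintegral_ofReal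
    (integrableOn_exp_mul_Ioi ha c) (Filter.Eventually.of_forall fun _ ↦ (exp_pos _).le)]

section RandomVariable

variable {Ω : Type*} [MeasurableSpace Ω] {P : Measure Ω} {X : Ω → ℝ} {s : ℝ}

lemma integrable_exp_neg_mul_of_nonneg [IsFiniteMeasure P] (hX0 : ∀ ω, 0 ≤ X ω)
    (hX : Measurable X) (hs : 0 ≤ s) : Integrable (fun ω ↦ exp (-s * X ω)) P :=
  Integrable.of_bound (by fun_prop) 1 (Filter.Eventually.of_forall fun ω ↦ by
    rw [norm_of_nonneg (exp_pos _).le]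
    exact exp_le_one_iff.mpr (by nlinarith [hX0 ω]))

lemma lintegral_one_sub_exp_neg_mul (hX0 : 0 ≤ᵐ[P] X) (hX : AEMeasurable X P) (hs : 0 ≤ s) :
    ∫⁻ ω, ENNReal.ofReal (1 - exp (-s * X ω)) ∂P
      = ∫⁻ t in Ioi 0, P {ω | t < X ω} * ENNReal.ofReal (s * exp (-s * t)) := by
  simpa only [intervalIntegral_mul_exp_neg_mul] using
    lintegral_comp_eq_lintegral_meas_lt_mul P hX0 hX
      (fun t _ ↦ (by fun_prop : Continuous fun t ↦ s * exp (-s * t)).intervalIntegrable _ _)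
      (Filter.Eventually.of_forall fun t ↦ by positivity)

lemma integral_exp_neg_mul_of_measure_lt_eq [IsProbabilityMeasure P] (hX0 : ∀ ω, 0 ≤ X ω)
    (hX : Measurable X) {μ c : ℝ} (hμ : 0 < μ) (hc : 0 ≤ c) (hs : 0 ≤ s)
    (htail : ∀ t > 0, P {ω | t < X ω} = ENNReal.ofReal (c * exp (-μ * t))) :
    ∫ ω, exp (-s * X ω) ∂P = 1 - s / (μ + s) * c := by
  have hint := integrable_exp_neg_mul_of_nonneg (P := P) hX0 hX hs
  have hint' : Integrable (fun ω ↦ 1 - exp (-s * X ω)) P := (integrable_const 1).sub hint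
  have hnonneg : ∀ ω, 0 ≤ 1 - exp (-s * X ω) := fun ω ↦
    sub_nonneg.mpr (exp_le_one_iff.mpr (by nlinarith [hX0 ω]))
  have hlin : ∫⁻ ω, ENNReal.ofReal (1 - exp (-s * X ω)) ∂P = ENNReal.ofReal (s / (μ + s) * c) :=
    calc ∫⁻ ω, ENNReal.ofReal (1 - exp (-s * X ω)) ∂P
        = ∫⁻ t in Ioi 0, ENNReal.ofReal (c * s) * ENNReal.ofReal (exp (-(μ + s) * t)) := by
          rw [lintegral_one_sub_exp_neg_mul (Filter.Eventually.of_forall hX0) hX.aemeasurable hs]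
          refine setLIntegral_congr_fun measurableSet_Ioi fun t ht ↦ ?_
          rw [htail t ht, ← ENNReal.ofReal_mul (by positivity),
            ← ENNReal.ofReal_mul (by positivity), neg_mul, neg_add, add_mul, exp_add]
          ring_nf
      _ = ENNReal.ofReal (s / (μ + s) * c) := by
          rw [lintegral_const_mul _ (by fun_prop), lintegral_Ioi_ofReal_exp_mul (by linarith),
            ← ENNReal.ofReal_mul (by positivity)]
          congr 1
          field_simp
          simp
  have hsub : ∫ ω, (1 - exp (-s * X ω)) ∂P = s / (μ + s) * c := by
    rw [← ENNReal.ofReal_eq_ofReal_iff (integral_nonneg hnonneg) (by positivity),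
      ofReal_integral_eq_lintegral_ofReal hint' (Filter.Eventually.of_forall hnonneg), hlin]
  rw [integral_sub (integrable_const 1) hint, integral_const, probReal_univ, one_smul] at hsub
  linarith

lemma ProbabilityTheory.IndepFun.measure_lt_eq_lintegral [IsFiniteMeasure P] {X Y : Ω → ℝ}
    (hXY : IndepFun X Y P) (hX : Measurable X) (hY : Measurable Y) :
    P {ω | X ω < Y ω} = ∫⁻ ω, P.map Y (Ioi (X ω)) ∂P := by
  have hS : MeasurableSet {p : ℝ × ℝ | p.1 < p.2} := measurableSet_lt measurable_fst measurable_snd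
  have hmap := (indepFun_iff_map_prod_eq_prod_map_map hX.aemeasurable hY.aemeasurable).mp hXY
  calc P {ω | X ω < Y ω} = P.map (fun ω ↦ (X ω, Y ω)) {p | p.1 < p.2} :=
        (Measure.map_apply (hX.prodMk hY) hS).symm
    _ = ∫⁻ x, P.map Y (Ioi x) ∂(P.map X) := by rw [hmap, Measure.prod_apply hS]; rfl
    _ = ∫⁻ ω, P.map Y (Ioi (X ω)) ∂P :=
        lintegral_map (Antitone.measurable fun _ _ h ↦ measure_mono (Ioi_subset_Ioi h)) hX

lemma map_Ioi_eq_ofReal_exp_of_cdf [IsProbabilityMeasure P] {B : Ω → ℝ} (hB : Measurable B)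
    {μ : ℝ} (hμ : 0 ≤ μ) (hB_exp : ∀ x, P {ω | B ω ≤ x} = ENNReal.ofReal (1 - exp (-μ * x)))
    {x : ℝ} (hx : 0 ≤ x) : P.map B (Ioi x) = ENNReal.ofReal (exp (-μ * x)) := by
  have : IsProbabilityMeasure (P.map B) := Measure.isProbabilityMeasure_map hB.aemeasurable
  have hexp : exp (-μ * x) ≤ 1 := exp_le_one_iff.mpr (by nlinarith)
  have hcdf : P.map B (Iic x) = ENNReal.ofReal (1 - exp (-μ * x)) :=
    (Measure.map_apply hB measurableSet_Iic).trans (hB_exp x)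
  rw [← compl_Iic, prob_compl_eq_one_sub measurableSet_Iic, hcdf, ← ENNReal.ofReal_one,
    ← ENNReal.ofReal_sub _ (sub_nonneg.mpr hexp), sub_sub_cancel]

lemma measure_add_lt_eq_of_indepFun [IsProbabilityMeasure P] {Y B : Ω → ℝ} (hY : Measurable Y)
    (hB : Measurable B) (hY0 : ∀ ω, 0 ≤ Y ω) {μ : ℝ} (hμ : 0 ≤ μ)
    (hB_exp : ∀ x, P {ω | B ω ≤ x} = ENNReal.ofReal (1 - exp (-μ * x))) (hBY : IndepFun B Y P)
    {t : ℝ} (ht : 0 ≤ t) :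
    P {ω | Y ω + t < B ω} = ENNReal.ofReal ((∫ ω, exp (-μ * Y ω) ∂P) * exp (-μ * t)) :=
  calc P {ω | Y ω + t < B ω} = ∫⁻ ω, P.map B (Ioi (Y ω + t)) ∂P :=
        (hBY.symm.comp (measurable_add_const t) measurable_id).measure_lt_eq_lintegral
          (hY.add_const t) hB
    _ = ∫⁻ ω, ENNReal.ofReal (exp (-μ * Y ω)) * ENNReal.ofReal (exp (-μ * t)) ∂P := by
        refine lintegral_congr fun ω ↦ ?_
        rw [map_Ioi_eq_ofReal_exp_of_cdf hB hμ hB_exp (by linarith [hY0 ω]), mul_add, exp_add,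
          ENNReal.ofReal_mul (exp_pos _).le]
    _ = ENNReal.ofReal ((∫ ω, exp (-μ * Y ω) ∂P) * exp (-μ * t)) := by
        rw [lintegral_mul_const _ (by fun_prop), ← ofReal_integral_eq_lintegral_ofReal
          (integrable_exp_neg_mul_of_nonneg hY0 hY hμ)
          (Filter.Eventually.of_forall fun _ ↦ (exp_pos _).le),
          ← ENNReal.ofReal_mul (integral_nonneg fun _ ↦ (exp_pos _).le)]

end RandomVariable

/-- Let `μ > 0`, `Y` a nonnegative random variable and `B` exponentially distributed with
rate `μ` (i.e. with CDF `x ↦ 1 - exp (-μ x)`), independent of `Y`. Then for every `s ≥ 0`,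
`E[exp (-s * max 0 (B - Y))] = 1 - (s / (μ + s)) * E[exp (-μ Y)]`. -/
theorem stmt4 {Ω : Type*} [MeasurableSpace Ω] (Pr : Measure Ω) [IsProbabilityMeasure Pr]
    (μ : ℝ) (hμ : 0 < μ) (Y B : Ω → ℝ) (hY : Measurable Y) (hB : Measurable B)
    (hY_nonneg : ∀ ω, 0 ≤ Y ω)
    (hB_exp : ∀ x : ℝ, Pr {ω | B ω ≤ x} = ENNReal.ofReal (1 - Real.exp (-μ * x)))
    (h_indep : IndepFun B Y Pr) :
    ∀ s : ℝ, 0 ≤ s →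
      ∫ ω, Real.exp (-s * max 0 (B ω - Y ω)) ∂Pr
        = 1 - (s / (μ + s)) * ∫ ω, Real.exp (-μ * Y ω) ∂Pr := by
  intro s hs
  have htail : ∀ t > 0, Pr {ω | t < max 0 (B ω - Y ω)}
      = ENNReal.ofReal ((∫ ω, exp (-μ * Y ω) ∂Pr) * exp (-μ * t)) := by
    intro t ht
    have hevent : {ω | t < max 0 (B ω - Y ω)} = {ω | Y ω + t < B ω} := by
      ext ω
      simp only [mem_ofPred_eq, lt_max_iff, not_lt_of_gt ht, false_or]
      constructor <;> intro h <;> linarith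
    rw [hevent]
    exact measure_add_lt_eq_of_indepFun hY hB hY_nonneg hμ.le hB_exp h_indep ht.le
  exact integral_exp_neg_mul_of_measure_lt_eq (fun ω ↦ le_max_left _ _) (by fun_prop) hμ
    (integral_nonneg fun _ ↦ (exp_pos _).le) hs htail
end

section
/- Let μ > 0, let N ≥ 1, let κ_1, …, κ_N ≥ 0 with Σ_{n=1}^N κ_n = 1, and let B have the mixed-Erlang distribution F_B(x) = Σ_{n=1}^N κ_n (1 − e^{−μx} Σ_{ℓ=0}^{n−1} (μx)^ℓ/ℓ!) for x ≥ 0. Let Y be a nonnegative random variable independent of B. Then for every s ≥ 0: E[e^{−s·max(0, B − Y)}] = 1 − Σ_{n=1}^N κ_n · E[e^{−μY} Σ_{ℓ=0}^{n−1} (μY)^ℓ/ℓ!] + Σ_{n=1}^N κ_n (μ/(μ+s))^n · E[e^{−μY} Σ_{ℓ=0}^{n−1} ((μ+s)Y)^ℓ/ℓ!]. -/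
/-!
Conditioning on `Y` (independence and Fubini) reduces the claim to a fixed `y ≥ 0`. By the
layer cake formula, `E[e^{-s (B - y)⁺}] = 1 - ∫_0^∞ s e^{-st} P(B > y + t) dt`, and the
mixed-Erlang tail is `P(B > x) = ∑ κ_n e^{-μx} T_n(μx)` with `T_n(x) = ∑_{ℓ<n} x^ℓ/ℓ!`.
Since `T_{n+1}' = T_n`, the function
`u ↦ (μ/(μ+s))^n e^{-(μ+s)u} T_n((μ+s)u) - e^{-(μ+s)u} T_n(μu)` is a primitive of
`s e^{-(μ+s)u} T_n(μu)` vanishing at infinity, which evaluates the tail integral in closed form.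
-/

open MeasureTheory ProbabilityTheory Real Filter Set Topology

noncomputable def expPartialSum (n : ℕ) (x : ℝ) : ℝ :=
  ∑ ℓ ∈ Finset.range n, x ^ ℓ / ℓ.factorial

lemma expPartialSum_succ (n : ℕ) (x : ℝ) :
    expPartialSum (n + 1) x = expPartialSum n x + x ^ n / n.factorial :=
  Finset.sum_range_succ _ _

lemma expPartialSum_nonneg {x : ℝ} (hx : 0 ≤ x) (n : ℕ) : 0 ≤ expPartialSum n x :=
  Finset.sum_nonneg fun ℓ _ => by positivity

lemma exp_neg_mul_expPartialSum_le_one {x : ℝ} (hx : 0 ≤ x) (n : ℕ) :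
    exp (-x) * expPartialSum n x ≤ 1 := by
  calc exp (-x) * expPartialSum n x ≤ exp (-x) * exp x :=
        mul_le_mul_of_nonneg_left (sum_le_exp_of_nonneg hx n) (exp_pos _).le
    _ = 1 := by rw [← exp_add, neg_add_cancel, exp_zero]

lemma expPartialSum_mul_le {c x : ℝ} (hc : 1 ≤ c) (hx : 0 ≤ x) (n : ℕ) :
    expPartialSum n (c * x) ≤ c ^ n * expPartialSum n x := by
  rw [expPartialSum, expPartialSum, Finset.mul_sum]
  refine Finset.sum_le_sum fun ℓ hℓ => ?_
  rw [mul_pow, mul_div_assoc]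
  exact mul_le_mul_of_nonneg_right
    (pow_le_pow_right₀ hc (Finset.mem_range.mp hℓ).le) (by positivity)

lemma exp_neg_mul_mul_expPartialSum_le {μ c y : ℝ} (hμ : 0 < μ) (hμc : μ ≤ c) (hy : 0 ≤ y)
    (n : ℕ) : exp (-μ * y) * expPartialSum n (c * y) ≤ (c / μ) ^ n := by
  have hμy : 0 ≤ μ * y := mul_nonneg hμ.le hy
  have hcy : c * y = c / μ * (μ * y) := by field_simp
  calc exp (-μ * y) * expPartialSum n (c * y)
      ≤ exp (-μ * y) * ((c / μ) ^ n * expPartialSum n (μ * y)) := by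
        rw [hcy]
        exact mul_le_mul_of_nonneg_left
          (expPartialSum_mul_le ((one_le_div hμ).mpr hμc) hμy n) (exp_pos _).le
    _ = (c / μ) ^ n * (exp (-(μ * y)) * expPartialSum n (μ * y)) := by ring_nf
    _ ≤ (c / μ) ^ n * 1 := by
        gcongr
        · exact pow_nonneg (div_nonneg (hμ.le.trans hμc) hμ.le) n
        · exact exp_neg_mul_expPartialSum_le_one hμy n
    _ = (c / μ) ^ n := mul_one _

@[fun_prop]
lemma continuous_expPartialSum (n : ℕ) : Continuous (expPartialSum n) := by
  unfold expPartialSum; fun_prop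

lemma hasDerivAt_expPartialSum (n : ℕ) (x : ℝ) :
    HasDerivAt (expPartialSum (n + 1)) (expPartialSum n x) x := by
  induction n with
  | zero =>
    have h1 : expPartialSum 1 = fun _ => 1 := funext fun _ => by simp [expPartialSum]
    simpa [h1, expPartialSum] using hasDerivAt_const x (1 : ℝ)
  | succ n ih =>
    have hpow : HasDerivAt (fun x => x ^ (n + 1) / ((n + 1).factorial : ℝ))
        (x ^ n / n.factorial) x := by
      refine ((hasDerivAt_pow (n + 1) x).div_const _).congr_deriv ?_
      rw [Nat.factorial_succ]; push_cast; field_simp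
    rw [show expPartialSum (n + 2) = _ from funext (expPartialSum_succ (n + 1)),
      expPartialSum_succ]
    exact ih.add hpow

lemma tendsto_exp_neg_mul_mul_expPartialSum {a : ℝ} (ha : 0 < a) (c : ℝ) (n : ℕ) :
    Tendsto (fun u => exp (-a * u) * expPartialSum n (c * u)) atTop (𝓝 0) := by
  have hterm (ℓ : ℕ) : Tendsto (fun u => exp (-a * u) * ((c * u) ^ ℓ / ℓ.factorial))
      atTop (𝓝 0) := by
    have h := (tendsto_rpow_mul_exp_neg_mul_atTop_nhds_zero ℓ a ha).const_mul
      (c ^ ℓ / ℓ.factorial)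
    rw [mul_zero] at h
    refine h.congr' ((eventually_ge_atTop 0).mono fun u hu => ?_)
    simp only [rpow_natCast, mul_pow]; ring
  simpa [expPartialSum, Finset.mul_sum] using tendsto_finsetSum _ fun ℓ _ => hterm ℓ

lemma hasDerivAt_exp_mul_mul_expPartialSum (a c u : ℝ) (n : ℕ) :
    HasDerivAt (fun u => exp (a * u) * expPartialSum (n + 1) (c * u))
      (exp (a * u) * (a * expPartialSum (n + 1) (c * u) + c * expPartialSum n (c * u))) u := by
  have hexp := ((hasDerivAt_id u).const_mul a).exp
  have hsum := (hasDerivAt_expPartialSum n (c * u)).comp u ((hasDerivAt_id u).const_mul c)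
  simp only [mul_one, id, Function.comp_def] at hexp hsum
  exact (hexp.mul hsum).congr_deriv (by ring)

noncomputable def erlangPrimitive (μ s : ℝ) (n : ℕ) (u : ℝ) : ℝ :=
  (μ / (μ + s)) ^ n * (exp (-(μ + s) * u) * expPartialSum n ((μ + s) * u))
    - exp (-(μ + s) * u) * expPartialSum n (μ * u)

lemma hasDerivAt_erlangPrimitive {μ s : ℝ} (hμs : μ + s ≠ 0) (n : ℕ) (u : ℝ) :
    HasDerivAt (erlangPrimitive μ s n) (s * (exp (-(μ + s) * u) * expPartialSum n (μ * u))) u := by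
  cases n with
  | zero =>
    have h0 : erlangPrimitive μ s 0 = fun _ => 0 := funext fun _ => by
      simp [erlangPrimitive, expPartialSum]
    simpa [h0, expPartialSum] using hasDerivAt_const u (0 : ℝ)
  | succ n =>
    have h := ((hasDerivAt_exp_mul_mul_expPartialSum (-(μ + s)) (μ + s) u n).const_mul
      ((μ / (μ + s)) ^ (n + 1))).sub (hasDerivAt_exp_mul_mul_expPartialSum (-(μ + s)) μ u n)
    refine h.congr_deriv ?_
    simp only [expPartialSum_succ, mul_pow, div_pow]
    field_simp
    ring

lemma tendsto_erlangPrimitive {μ s : ℝ} (hμs : 0 < μ + s) (n : ℕ) :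
    Tendsto (erlangPrimitive μ s n) atTop (𝓝 0) := by
  have h := ((tendsto_exp_neg_mul_mul_expPartialSum hμs (μ + s) n).const_mul
    ((μ / (μ + s)) ^ n)).sub (tendsto_exp_neg_mul_mul_expPartialSum hμs μ n)
  rwa [mul_zero, sub_zero] at h

lemma integral_Ioi_mul_mixedErlangTail {μ s y : ℝ} (hμ : 0 < μ) (hs : 0 ≤ s) (hy : 0 ≤ y)
    (I : Finset ℕ) {κ : ℕ → ℝ} (hκ : ∀ n, 0 ≤ κ n) :
    ∫ t in Ioi 0, s * exp (-s * t) *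
        ∑ n ∈ I, κ n * (exp (-μ * (y + t)) * expPartialSum n (μ * (y + t)))
      = ∑ n ∈ I, κ n * (exp (-μ * y) * expPartialSum n (μ * y))
        - ∑ n ∈ I, κ n * (μ / (μ + s)) ^ n * (exp (-μ * y) * expPartialSum n ((μ + s) * y)) := by
  have hμs : 0 < μ + s := by linarith
  set G : ℝ → ℝ := fun t => exp (s * y) * ∑ n ∈ I, κ n * erlangPrimitive μ s n (y + t)
  have hexp (t : ℝ) :
      exp (s * y) * exp (-(μ + s) * (y + t)) = exp (-s * t) * exp (-μ * (y + t)) := by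
    rw [← exp_add, ← exp_add]; ring_nf
  have hG (t : ℝ) : HasDerivAt G (s * exp (-s * t) *
      ∑ n ∈ I, κ n * (exp (-μ * (y + t)) * expPartialSum n (μ * (y + t)))) t := by
    have h := (HasDerivAt.fun_sum (u := I) fun n _ =>
      ((hasDerivAt_erlangPrimitive hμs.ne' n (y + t)).comp_const_add y t).const_mul
        (κ n)).const_mul (exp (s * y))
    refine h.congr_deriv ?_
    simp only [Finset.mul_sum]
    refine Finset.sum_congr rfl fun n _ => ?_
    linear_combination (s * κ n * expPartialSum n (μ * (y + t))) * hexp t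
  have hG_lim : Tendsto G atTop (𝓝 0) := by
    have h := (tendsto_finsetSum I fun n _ => ((tendsto_erlangPrimitive hμs n).comp
      (tendsto_atTop_add_const_left atTop y tendsto_id)).const_mul (κ n)).const_mul (exp (s * y))
    simpa using h
  have hG_deriv_nonneg (t : ℝ) (ht : t ∈ Ioi 0) : 0 ≤ s * exp (-s * t) *
      ∑ n ∈ I, κ n * (exp (-μ * (y + t)) * expPartialSum n (μ * (y + t))) := by
    have hyt : 0 ≤ μ * (y + t) := mul_nonneg hμ.le (by linarith [ht.out])
    exact mul_nonneg (by positivity) (Finset.sum_nonneg fun n _ =>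
      mul_nonneg (hκ n) (mul_nonneg (exp_pos _).le (expPartialSum_nonneg hyt n)))
  rw [integral_Ioi_of_hasDerivAt_of_nonneg (hG 0).continuousAt.continuousWithinAt
    (fun t _ => hG t) hG_deriv_nonneg hG_lim]
  simp only [G, erlangPrimitive, add_zero, Finset.mul_sum, ← Finset.sum_sub_distrib, zero_sub,
    ← Finset.sum_neg_distrib]
  refine Finset.sum_congr rfl fun n _ => ?_
  have h0 := hexp 0
  rw [add_zero, mul_zero, exp_zero, one_mul] at h0
  linear_combination (κ n * (expPartialSum n (μ * y)
    - (μ / (μ + s)) ^ n * expPartialSum n ((μ + s) * y))) * h0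

lemma integral_mul_exp_neg_mul (s x : ℝ) : ∫ t in 0..x, s * exp (-s * t) = 1 - exp (-s * x) := by
  have hderiv (t : ℝ) : HasDerivAt (fun t => -exp (-s * t)) (s * exp (-s * t)) t := by
    have := (((hasDerivAt_id t).const_mul (-s)).exp).neg
    simp only [id, mul_one] at this
    exact this.congr_deriv (by ring)
  rw [intervalIntegral.integral_eq_sub_of_hasDerivAt (fun t _ => hderiv t)
    ((by fun_prop : Continuous fun t => s * exp (-s * t)).intervalIntegrable _ _)]
  simp only [neg_mul, mul_zero, exp_zero, sub_neg_eq_add]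
  ring

lemma integral_exp_neg_mul_eq_one_sub_tail {α : Type*} [MeasurableSpace α] (ν : Measure α)
    [IsProbabilityMeasure ν] {f : α → ℝ} (hf : Measurable f) (hf0 : 0 ≤ f) {s : ℝ} (hs : 0 ≤ s) :
    ∫ a, exp (-s * f a) ∂ν = 1 - ∫ t in Ioi 0, s * exp (-s * t) * ν.real {a | t < f a} := by
  have hlayer := lintegral_comp_eq_lintegral_meas_lt_mul ν (Eventually.of_forall hf0)
    hf.aemeasurable (g := fun t => s * exp (-s * t))
    (fun _ _ => (by fun_prop : Continuous fun t => s * exp (-s * t)).intervalIntegrable _ _)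
    (Eventually.of_forall fun _ => by positivity)
  simp only [integral_mul_exp_neg_mul] at hlayer
  have hle_one (a : α) : exp (-s * f a) ≤ 1 :=
    exp_le_one_iff.mpr (by rw [neg_mul]; exact neg_nonpos.mpr (mul_nonneg hs (hf0 a)))
  have hint : Integrable (fun a => exp (-s * f a)) ν :=
    (integrable_const 1).mono' (by fun_prop) (Eventually.of_forall fun a => by
      rw [norm_of_nonneg (exp_pos _).le]; exact hle_one a)
  have htail : Measurable fun t => ν.real {a | t < f a} :=
    Antitone.measurable fun _ _ hst => measureReal_mono fun _ ha => lt_of_le_of_lt hst ha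
  calc ∫ a, exp (-s * f a) ∂ν = 1 - ∫ a, (1 - exp (-s * f a)) ∂ν := by
        rw [integral_sub (integrable_const 1) hint]; simp
    _ = 1 - (∫⁻ a, ENNReal.ofReal (1 - exp (-s * f a)) ∂ν).toReal := by
        rw [integral_eq_lintegral_of_nonneg_ae (Eventually.of_forall fun a => by
          simpa using hle_one a) (by fun_prop)]
    _ = 1 - ∫ t in Ioi 0, s * exp (-s * t) * ν.real {a | t < f a} := by
        rw [hlayer, integral_eq_lintegral_of_nonneg_ae (Eventually.of_forall fun _ => by
          positivity) (by fun_prop)]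
        congr 2
        refine lintegral_congr fun t => ?_
        rw [measureReal_def, ENNReal.ofReal_mul (by positivity : 0 ≤ s * exp (-s * t)),
          ENNReal.ofReal_toReal (measure_ne_top _ _), mul_comm]

lemma ProbabilityTheory.IndepFun.integral_comp_eq_integral_integral {Ω α β E : Type*}
    [MeasurableSpace Ω] [MeasurableSpace α] [MeasurableSpace β] [NormedAddCommGroup E]
    [NormedSpace ℝ E] {P : Measure Ω} [IsFiniteMeasure P] {X : Ω → α} {Y : Ω → β}
    (hXY : IndepFun X Y P) (hX : AEMeasurable X P) (hY : AEMeasurable Y P) {f : α × β → E}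
    (hf : Integrable f ((P.map X).prod (P.map Y))) :
    ∫ ω, f (X ω, Y ω) ∂P = ∫ y, ∫ x, f (x, y) ∂(P.map X) ∂(P.map Y) := by
  have hmap := hXY.map_prod_eq_prod_map_map hX hY
  rw [← integral_prod_symm f hf, ← hmap, integral_map (hX.prodMk hY) (hmap ▸ hf.1)]

lemma integrable_exp_neg_mul_mul_expPartialSum {Ω : Type*} [MeasurableSpace Ω] {P : Measure Ω}
    [IsFiniteMeasure P] {Y : Ω → ℝ} (hY : Measurable Y) (hY0 : ∀ ω, 0 ≤ Y ω) {μ c : ℝ}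
    (hμ : 0 < μ) (hμc : μ ≤ c) (n : ℕ) :
    Integrable (fun ω => exp (-μ * Y ω) * expPartialSum n (c * Y ω)) P := by
  have hmeas : Measurable fun y => exp (-μ * y) * expPartialSum n (c * y) := by fun_prop
  refine (integrable_const ((c / μ) ^ n)).mono' (hmeas.comp hY).aestronglyMeasurable
    (Eventually.of_forall fun ω => ?_)
  have hcY : 0 ≤ c * Y ω := mul_nonneg (hμ.le.trans hμc) (hY0 ω)
  rw [norm_of_nonneg (mul_nonneg (exp_pos _).le (expPartialSum_nonneg hcY n))]
  exact exp_neg_mul_mul_expPartialSum_le hμ hμc (hY0 ω) n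

lemma measureReal_Ioi_of_mixedErlang {ν : Measure ℝ} [IsProbabilityMeasure ν] {μ x : ℝ}
    (hμ : 0 ≤ μ) (hx : 0 ≤ x) {I : Finset ℕ} {κ : ℕ → ℝ} (hκ : ∀ n, 0 ≤ κ n)
    (hκ_sum : ∑ n ∈ I, κ n = 1)
    (hcdf : ν (Iic x) = ENNReal.ofReal
      (∑ n ∈ I, κ n * (1 - exp (-μ * x) * expPartialSum n (μ * x)))) :
    ν.real (Ioi x) = ∑ n ∈ I, κ n * (exp (-μ * x) * expPartialSum n (μ * x)) := by
  have hμx : 0 ≤ μ * x := mul_nonneg hμ hx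
  have hcdf_nonneg : 0 ≤ ∑ n ∈ I, κ n * (1 - exp (-μ * x) * expPartialSum n (μ * x)) :=
    Finset.sum_nonneg fun n _ => mul_nonneg (hκ n) (sub_nonneg.mpr (by
      simpa only [neg_mul] using exp_neg_mul_expPartialSum_le_one hμx n))
  rw [← compl_Iic, probReal_compl_eq_one_sub measurableSet_Iic, measureReal_def, hcdf,
    ENNReal.toReal_ofReal hcdf_nonneg]
  simp only [mul_sub, mul_one, Finset.sum_sub_distrib, hκ_sum, sub_sub_cancel]

lemma integral_exp_neg_mul_max_sub_of_mixedErlang {ν : Measure ℝ} [IsProbabilityMeasure ν]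
    {μ s y : ℝ} (hμ : 0 < μ) (hs : 0 ≤ s) (hy : 0 ≤ y) {I : Finset ℕ} {κ : ℕ → ℝ}
    (hκ : ∀ n, 0 ≤ κ n)
    (htail : ∀ x, 0 ≤ x →
      ν.real (Ioi x) = ∑ n ∈ I, κ n * (exp (-μ * x) * expPartialSum n (μ * x))) :
    ∫ b, exp (-s * max 0 (b - y)) ∂ν
      = 1 - ∑ n ∈ I, κ n * (exp (-μ * y) * expPartialSum n (μ * y))
        + ∑ n ∈ I, κ n * (μ / (μ + s)) ^ n * (exp (-μ * y) * expPartialSum n ((μ + s) * y)) := by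
  have hsup (t : ℝ) (ht : t ∈ Ioi 0) : {b : ℝ | t < max 0 (b - y)} = Ioi (y + t) := by
    ext b
    simp only [mem_ofPred_eq, mem_Ioi, lt_max_iff, ht.out.not_gt, false_or]
    constructor <;> intro h <;> linarith
  rw [integral_exp_neg_mul_eq_one_sub_tail ν (f := fun b => max 0 (b - y)) (by fun_prop)
      (fun _ => le_max_left _ _) hs,
    setIntegral_congr_fun measurableSet_Ioi fun t ht => by
      rw [hsup t ht, htail (y + t) (by linarith [ht.out])],
    integral_Ioi_mul_mixedErlangTail hμ hs hy I hκ]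
  ring

theorem stmt5_general {Ω : Type*} [MeasurableSpace Ω] (Pr : Measure Ω) [IsProbabilityMeasure Pr]
    (μ : ℝ) (hμ : 0 < μ) (N : ℕ) (κ : ℕ → ℝ)
    (hκ_nonneg : ∀ n, 0 ≤ κ n) (hκ_sum : ∑ n ∈ Finset.Icc 1 N, κ n = 1)
    (Y B : Ω → ℝ) (hY : Measurable Y) (hB : Measurable B)
    (hY_nonneg : ∀ ω, 0 ≤ Y ω)
    (hB_cdf : ∀ x : ℝ, 0 ≤ x →
      Pr {ω | B ω ≤ x} = ENNReal.ofReal (∑ n ∈ Finset.Icc 1 N, κ n *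
        (1 - Real.exp (-μ * x) * ∑ ℓ ∈ Finset.range n, (μ * x) ^ ℓ / ℓ.factorial)))
    (h_indep : IndepFun B Y Pr) :
    ∀ s : ℝ, 0 ≤ s →
      ∫ ω, Real.exp (-s * max 0 (B ω - Y ω)) ∂Pr
        = 1
          - ∑ n ∈ Finset.Icc 1 N, κ n *
              ∫ ω, Real.exp (-μ * Y ω) *
                ∑ ℓ ∈ Finset.range n, (μ * Y ω) ^ ℓ / ℓ.factorial ∂Pr
          + ∑ n ∈ Finset.Icc 1 N, κ n * (μ / (μ + s)) ^ n *
              ∫ ω, Real.exp (-μ * Y ω) *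
                ∑ ℓ ∈ Finset.range n, ((μ + s) * Y ω) ^ ℓ / ℓ.factorial ∂Pr := by
  intro s hs
  have : IsProbabilityMeasure (Pr.map B) := Measure.isProbabilityMeasure_map hB.aemeasurable
  have htail (x : ℝ) (hx : 0 ≤ x) := measureReal_Ioi_of_mixedErlang (ν := Pr.map B) hμ.le hx
    hκ_nonneg hκ_sum (by rw [Measure.map_apply hB measurableSet_Iic]; exact hB_cdf x hx)
  have hinner (y : ℝ) (hy : 0 ≤ y) :=
    integral_exp_neg_mul_max_sub_of_mixedErlang hμ hs hy hκ_nonneg htail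
  have hf : Integrable (fun p : ℝ × ℝ => exp (-s * max 0 (p.1 - p.2)))
      ((Pr.map B).prod (Pr.map Y)) :=
    (integrable_const 1).mono' (by fun_prop) (Eventually.of_forall fun p => by
      rw [norm_of_nonneg (exp_pos _).le, exp_le_one_iff, neg_mul, neg_nonpos]
      exact mul_nonneg hs (le_max_left _ _))
  have hT_int := integrable_exp_neg_mul_mul_expPartialSum (P := Pr) hY hY_nonneg hμ le_rfl
  have hTs_int := integrable_exp_neg_mul_mul_expPartialSum (P := Pr) hY hY_nonneg hμ
    (le_add_of_nonneg_right hs)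
  have hT_sum := integrable_finsetSum (Finset.Icc 1 N) fun n _ => (hT_int n).const_mul (κ n)
  have hTs_sum := integrable_finsetSum (Finset.Icc 1 N) fun n _ =>
    (hTs_int n).const_mul (κ n * (μ / (μ + s)) ^ n)
  rw [h_indep.integral_comp_eq_integral_integral hB.aemeasurable hY.aemeasurable hf,
    integral_congr_ae ((ae_map_iff hY.aemeasurable measurableSet_Ici).mpr
      (Eventually.of_forall hY_nonneg) |>.mono hinner),
    integral_map hY.aemeasurable (by fun_prop),
    integral_add ((integrable_const 1).sub' hT_sum) hTs_sum,
    integral_sub (integrable_const 1) hT_sum,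
    integral_finsetSum _ fun n _ => (hT_int n).const_mul _,
    integral_finsetSum _ fun n _ => (hTs_int n).const_mul _]
  simp only [integral_const_mul, integral_const, probReal_univ, smul_eq_mul, mul_one, expPartialSum]

/-- Mixed-Erlang `B` (CDF `x ↦ ∑_{n=1}^N κ_n (1 - e^{-μx} ∑_{ℓ<n} (μx)^ℓ/ℓ!)` for `x ≥ 0`)
independent of a nonnegative `Y`: the transform identity
`E[e^{-s max(0, B-Y)}] = 1 - ∑_n κ_n E[e^{-μY} ∑_{ℓ<n} (μY)^ℓ/ℓ!]
  + ∑_n κ_n (μ/(μ+s))^n E[e^{-μY} ∑_{ℓ<n} ((μ+s)Y)^ℓ/ℓ!]` for all `s ≥ 0`. -/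
theorem stmt5 {Ω : Type*} [MeasurableSpace Ω] (Pr : Measure Ω) [IsProbabilityMeasure Pr]
    (μ : ℝ) (hμ : 0 < μ) (N : ℕ) (hN : 1 ≤ N) (κ : ℕ → ℝ)
    (hκ_nonneg : ∀ n, 0 ≤ κ n) (hκ_sum : ∑ n ∈ Finset.Icc 1 N, κ n = 1)
    (Y B : Ω → ℝ) (hY : Measurable Y) (hB : Measurable B)
    (hY_nonneg : ∀ ω, 0 ≤ Y ω)
    (hB_nonneg : ∀ᵐ ω ∂Pr, 0 ≤ B ω)
    (hB_cdf : ∀ x : ℝ, 0 ≤ x →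
      Pr {ω | B ω ≤ x} = ENNReal.ofReal (∑ n ∈ Finset.Icc 1 N, κ n *
        (1 - Real.exp (-μ * x) * ∑ ℓ ∈ Finset.range n, (μ * x) ^ ℓ / ℓ.factorial)))
    (h_indep : IndepFun B Y Pr) :
    ∀ s : ℝ, 0 ≤ s →
      ∫ ω, Real.exp (-s * max 0 (B ω - Y ω)) ∂Pr
        = 1
          - ∑ n ∈ Finset.Icc 1 N, κ n *
              ∫ ω, Real.exp (-μ * Y ω) *
                ∑ ℓ ∈ Finset.range n, (μ * Y ω) ^ ℓ / ℓ.factorial ∂Pr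
          + ∑ n ∈ Finset.Icc 1 N, κ n * (μ / (μ + s)) ^ n *
              ∫ ω, Real.exp (-μ * Y ω) *
                ∑ ℓ ∈ Finset.range n, ((μ + s) * Y ω) ^ ℓ / ℓ.factorial ∂Pr :=
  stmt5_general Pr μ hμ N κ hκ_nonneg hκ_sum Y B hY hB hY_nonneg hB_cdf h_indep
end

section
/- Let λ > 0 and let A be exponentially distributed with rate λ. Let B ≥ 0 be a random variable with finite mean and let χ, ψ : [0,∞) → ℝ be functions with χ(0) = 1, ψ(0) = 0, both differentiable at 0, such that for every s ≥ 0 the conditional expectation satisfies E[e^{−sB} | A] = χ(s)·e^{−ψ(s)·A} almost surely, with ψ(s) ≥ 0 and χ(s) ≥ 0 for s ≥ 0, and suppose AB is integrable. Then E[A·B] = (2ψ′(0) − λχ′(0))/λ², and consequently the covariance satisfies Cov(A, B) = E[AB] − E[A]E[B] = ψ′(0)/λ². -/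
/-!
Conditioning on `A` turns the hypothesis on `E[e^{-sB} | A]` into closed forms: for `s ≥ 0`,
`E[e^{-sB}] = χ(s) λ/(λ + ψ(s))` and `E[A e^{-sB}] = χ(s) λ/(λ + ψ(s))²`, because
`E[e^{-cA}] = λ/(λ + c)` and `E[A e^{-cA}] = λ/(λ + c)²` for an `Exp(λ)` variable.
Differentiating at `s = 0` from the right gives `-E[B]` and `-E[AB]` on the left (dominated
convergence, since `|(e^{-sb} - 1)/s| ≤ b`), and `χ'(0) - ψ'(0)/λ` and
`χ'(0)/λ - 2ψ'(0)/λ²` on the right. Together with `E[A] = 1/λ` this gives the covariance.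
-/

open MeasureTheory ProbabilityTheory Real Set Filter Topology
open scoped ENNReal NNReal

lemma Real.abs_exp_neg_sub_one_le {x : ℝ} (hx : 0 ≤ x) : |exp (-x) - 1| ≤ x := by
  have h₁ : exp (-x) ≤ 1 := exp_le_one_iff.2 (neg_nonpos.2 hx)
  have h₂ : -x + 1 ≤ exp (-x) := add_one_le_exp (-x)
  rw [abs_of_nonpos (by linarith)]
  linarith

lemma Real.abs_slope_exp_neg_mul_le {b s : ℝ} (hb : 0 ≤ b) (hs : 0 < s) :
    |slope (fun t => exp (-t * b)) 0 s| ≤ b := by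
  rw [slope_def_field, sub_zero, neg_zero, zero_mul, exp_zero, abs_div, abs_of_pos hs,
    div_le_iff₀ hs, neg_mul, mul_comm b]
  exact abs_exp_neg_sub_one_le (by positivity)

lemma Real.hasDerivAt_exp_neg_mul_zero (b : ℝ) : HasDerivAt (fun t => exp (-t * b)) (-b) 0 := by
  simpa using ((hasDerivAt_id (0 : ℝ)).neg.mul_const b).exp

lemma hasDerivWithinAt_mul_div_add_pow {χ ψ : ℝ → ℝ} {χ' ψ' lam : ℝ} {t : Set ℝ}
    (hχ : HasDerivWithinAt χ χ' t 0) (hψ : HasDerivWithinAt ψ ψ' t 0) (hχ0 : χ 0 = 1)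
    (hψ0 : ψ 0 = 0) (hlam : lam ≠ 0) (n : ℕ) :
    HasDerivWithinAt (fun s => χ s * (lam / (lam + ψ s) ^ n))
      ((lam * χ' - n * ψ') / lam ^ n) t 0 := by
  have hden : (lam + ψ 0) ^ n ≠ 0 := by simp [hψ0, hlam]
  have hquot := (hasDerivWithinAt_const 0 t lam).div ((hψ.const_add lam).pow n) hden
  refine (hχ.mul hquot).congr_deriv ?_
  rcases n with _ | n
  · simp [hχ0, mul_comm]
  · simp only [Pi.div_apply, Pi.pow_apply, hχ0, hψ0, add_zero, Nat.add_sub_cancel]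
    field_simp
    ring

namespace MeasureTheory

lemma integral_mul_eq_integral_mul_of_condExp_ae_eq {Ω : Type*} {m m₀ : MeasurableSpace Ω}
    {μ : Measure Ω} (hm : m ≤ m₀) [SigmaFinite (μ.trim hm)] {f g h : Ω → ℝ}
    (hf : StronglyMeasurable[m] f) (hfg : Integrable (f * g) μ)
    (hg : Integrable g μ) (hgh : μ[g | m] =ᵐ[μ] h) :
    ∫ ω, f ω * g ω ∂μ = ∫ ω, f ω * h ω ∂μ := by
  calc ∫ ω, f ω * g ω ∂μ = ∫ ω, (μ[f * g | m]) ω ∂μ := (integral_condExp hm).symm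
    _ = ∫ ω, f ω * h ω ∂μ := by
      refine integral_congr_ae ?_
      filter_upwards [condExp_mul_of_stronglyMeasurable_left hf hfg hg, hgh] with ω h₁ h₂
      rw [h₁, Pi.mul_apply, h₂]

section

variable {Ω : Type*} [MeasurableSpace Ω] {μ : Measure Ω} {C B : Ω → ℝ}

lemma Integrable.mul_exp_neg_mul (hC : Integrable C μ) (hB : AEStronglyMeasurable B μ)
    (hB_nonneg : 0 ≤ᵐ[μ] B) {s : ℝ} (hs : 0 ≤ s) :
    Integrable (fun ω => C ω * exp (-s * B ω)) μ := by
  refine hC.mul_bdd (c := 1) (by fun_prop) ?_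
  filter_upwards [hB_nonneg] with ω hω
  rw [norm_of_nonneg (exp_pos _).le, exp_le_one_iff, neg_mul, neg_nonpos]
  exact mul_nonneg hs hω

lemma hasDerivWithinAt_integral_mul_exp_neg_mul (hC : Integrable C μ)
    (hB : AEStronglyMeasurable B μ) (hB_nonneg : 0 ≤ᵐ[μ] B)
    (hCB : Integrable (fun ω => C ω * B ω) μ) :
    HasDerivWithinAt (fun s => ∫ ω, C ω * exp (-s * B ω) ∂μ) (-∫ ω, C ω * B ω ∂μ)
      (Ici 0) 0 := by
  -- only a right derivative: for `s < 0` the integrand need not be integrable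
  rw [← hasDerivWithinAt_Ioi_iff_Ici, hasDerivWithinAt_iff_tendsto_slope' self_notMem_Ioi]
  have hslope : ∀ s ∈ Ioi (0 : ℝ), slope (fun s => ∫ ω, C ω * exp (-s * B ω) ∂μ) 0 s
      = ∫ ω, C ω * slope (fun t => exp (-t * B ω)) 0 s ∂μ := fun s hs => by
    simp only [slope_def_field, sub_zero, neg_zero, zero_mul, exp_zero, mul_one]
    rw [← integral_sub (hC.mul_exp_neg_mul hB hB_nonneg (le_of_lt hs)) hC, ← integral_div]
    congr 1 with ω
    ring
  have hlim : Tendsto (fun s => ∫ ω, C ω * slope (fun t => exp (-t * B ω)) 0 s ∂μ)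
      (𝓝[>] 0) (𝓝 (∫ ω, C ω * -B ω ∂μ)) := by
    refine tendsto_integral_filter_of_dominated_convergence (fun ω => ‖C ω * B ω‖)
      (Eventually.of_forall fun s => ?_) ?_ hCB.norm ?_
    · simp only [slope_def_field]
      fun_prop
    · filter_upwards [self_mem_nhdsWithin] with s hs
      filter_upwards [hB_nonneg] with ω hω
      rw [norm_mul, norm_mul, norm_of_nonneg hω]
      exact mul_le_mul_of_nonneg_left (Real.abs_slope_exp_neg_mul_le hω hs) (norm_nonneg _)
    · refine Eventually.of_forall fun ω => Tendsto.const_mul (C ω) ?_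
      exact (hasDerivWithinAt_iff_tendsto_slope' self_notMem_Ioi).1
        (Real.hasDerivAt_exp_neg_mul_zero (B ω)).hasDerivWithinAt
  simp only [mul_neg, integral_neg] at hlim
  exact hlim.congr' (eventually_nhdsWithin_of_forall fun s hs => (hslope s hs).symm)

end

end MeasureTheory

namespace ProbabilityTheory

lemma expMeasure_eq_withDensity_Ioi (r : ℝ) :
    expMeasure r = (volume.restrict (Ioi 0)).withDensity
      fun x => ((r * exp (-(r * x))).toNNReal : ℝ≥0∞) := by
  rw [Measure.restrict_congr_set Ioi_ae_eq_Ici, ← withDensity_indicator measurableSet_Ici]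
  change volume.withDensity (exponentialPDF r) = _
  congr 1 with x
  by_cases hx : 0 ≤ x
  · simp [indicator_of_mem (mem_Ici.2 hx), exponentialPDF_of_nonneg hx, ENNReal.ofReal]
  · simp [indicator_of_notMem (notMem_Ici.2 (not_le.1 hx)), exponentialPDF_of_neg (not_le.1 hx)]

lemma coe_toNNReal_mul_exp_neg_mul {r : ℝ} (hr : 0 ≤ r) (x : ℝ) :
    ((r * exp (-(r * x))).toNNReal : ℝ) = r * exp (-(r * x)) :=
  Real.coe_toNNReal _ (by positivity)

lemma integral_expMeasure {r : ℝ} (hr : 0 ≤ r) (g : ℝ → ℝ) :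
    ∫ x, g x ∂expMeasure r = ∫ x in Ioi 0, r * exp (-(r * x)) * g x := by
  rw [expMeasure_eq_withDensity_Ioi, integral_withDensity_eq_integral_smul (by fun_prop)]
  simp only [NNReal.smul_def, smul_eq_mul, coe_toNNReal_mul_exp_neg_mul hr]

lemma integrable_expMeasure_iff {r : ℝ} (hr : 0 ≤ r) {g : ℝ → ℝ} :
    Integrable g (expMeasure r) ↔ IntegrableOn (fun x => r * exp (-(r * x)) * g x) (Ioi 0) := by
  rw [expMeasure_eq_withDensity_Ioi, integrable_withDensity_iff_integrable_smul (by fun_prop)]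
  simp only [NNReal.smul_def, smul_eq_mul, coe_toNNReal_mul_exp_neg_mul hr, IntegrableOn]

lemma integral_exp_neg_mul_expMeasure {r c : ℝ} (hr : 0 ≤ r) (hrc : 0 < r + c) :
    ∫ x, exp (-c * x) ∂expMeasure r = r / (r + c) := by
  have h := integral_rpow_mul_exp_neg_mul_Ioi one_pos hrc
  simp only [sub_self, rpow_zero, one_mul, rpow_one, Gamma_one, mul_one] at h
  calc ∫ x, exp (-c * x) ∂expMeasure r
      = ∫ x in Ioi 0, r * exp (-((r + c) * x)) := by
        rw [integral_expMeasure hr]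
        congr 1 with x
        rw [mul_assoc, ← exp_add]
        ring_nf
    _ = r / (r + c) := by rw [integral_const_mul, h, mul_one_div]

lemma integral_mul_exp_neg_mul_expMeasure {r c : ℝ} (hr : 0 ≤ r) (hrc : 0 < r + c) :
    ∫ x, x * exp (-c * x) ∂expMeasure r = r / (r + c) ^ 2 := by
  have h := integral_rpow_mul_exp_neg_mul_Ioi two_pos hrc
  norm_num [Gamma_two] at h
  calc ∫ x, x * exp (-c * x) ∂expMeasure r
      = ∫ x in Ioi 0, r * (x * exp (-((r + c) * x))) := by
        rw [integral_expMeasure hr]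
        congr 1 with x
        rw [show -((r + c) * x) = -(r * x) + -c * x by ring, exp_add]
        ring
    _ = r / (r + c) ^ 2 := by rw [integral_const_mul, h, div_eq_mul_inv]

lemma integral_id_expMeasure {r : ℝ} (hr : 0 < r) : ∫ x, x ∂expMeasure r = r⁻¹ := by
  simpa [sq, hr.ne'] using integral_mul_exp_neg_mul_expMeasure hr.le (c := 0) (by simpa)

lemma integrable_id_expMeasure {r : ℝ} (hr : 0 < r) : Integrable id (expMeasure r) := by
  rw [integrable_expMeasure_iff hr.le]
  have h : IntegrableOn (fun x : ℝ => r * (x ^ (1 : ℝ) * exp (-r * x ^ (1 : ℝ)))) (Ioi 0) :=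
    (integrableOn_rpow_mul_exp_neg_mul_rpow (by norm_num) one_pos hr).const_mul r
  refine h.congr_fun (fun x _ => ?_) measurableSet_Ioi
  simp only [rpow_one, id, neg_mul]
  ring

lemma map_eq_expMeasure_of_measure_le {Ω : Type*} [MeasurableSpace Ω] {μ : Measure Ω}
    [IsFiniteMeasure μ] {X : Ω → ℝ} {r : ℝ} (hr : 0 < r) (hX : Measurable X)
    (hcdf : ∀ x, μ {ω | X ω ≤ x} = ENNReal.ofReal (1 - exp (-r * x))) :
    μ.map X = expMeasure r := by
  have := isProbabilityMeasure_expMeasure hr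
  refine Measure.ext_of_Iic _ _ fun x => ?_
  rw [Measure.map_apply hX measurableSet_Iic, ← ofReal_cdf, cdf_expMeasure_eq hr]
  refine (hcdf x).trans ?_
  split_ifs with hx
  · ring_nf
  · have : 1 ≤ exp (-r * x) := one_le_exp (by nlinarith)
    rw [ENNReal.ofReal_of_nonpos (by linarith), ENNReal.ofReal_zero]

lemma integrable_of_map_eq_expMeasure {Ω : Type*} [MeasurableSpace Ω] {μ : Measure Ω}
    {X : Ω → ℝ} {r : ℝ} (hr : 0 < r) (hX : Measurable X) (hlaw : μ.map X = expMeasure r) :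
    Integrable X μ :=
  (integrable_map_measure aestronglyMeasurable_id hX.aemeasurable).1
    (hlaw ▸ integrable_id_expMeasure hr)

end ProbabilityTheory

section LaplaceTransform

variable {Ω : Type*} [MeasurableSpace Ω] {Pr : Measure Ω} [IsProbabilityMeasure Pr]
  {A B : Ω → ℝ} {lam : ℝ} {χ ψ : ℝ → ℝ} {s : ℝ}

lemma integral_exp_neg_mul_eq_of_condExp (hA : Measurable A) (hlaw : Pr.map A = expMeasure lam)
    (hlam : 0 < lam) (hψ : 0 ≤ ψ s)
    (hcond : Pr[fun ω => exp (-s * B ω) | MeasurableSpace.comap A inferInstance]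
      =ᵐ[Pr] fun ω => χ s * exp (-(ψ s) * A ω)) :
    ∫ ω, exp (-s * B ω) ∂Pr = χ s * (lam / (lam + ψ s)) := by
  calc ∫ ω, exp (-s * B ω) ∂Pr
      = ∫ ω, χ s * exp (-(ψ s) * A ω) ∂Pr :=
        (integral_condExp hA.comap_le).symm.trans (integral_congr_ae hcond)
    _ = χ s * (lam / (lam + ψ s)) := by
        rw [integral_const_mul, ← integral_map (f := fun x => exp (-(ψ s) * x)) hA.aemeasurable
          (by fun_prop), hlaw,
          integral_exp_neg_mul_expMeasure hlam.le (by positivity)]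

lemma integral_mul_exp_neg_mul_eq_of_condExp (hA : Measurable A)
    (hlaw : Pr.map A = expMeasure lam) (hlam : 0 < lam) (hB : AEStronglyMeasurable B Pr)
    (hB_nonneg : 0 ≤ᵐ[Pr] B) (hs : 0 ≤ s) (hψ : 0 ≤ ψ s)
    (hcond : Pr[fun ω => exp (-s * B ω) | MeasurableSpace.comap A inferInstance]
      =ᵐ[Pr] fun ω => χ s * exp (-(ψ s) * A ω)) :
    ∫ ω, A ω * exp (-s * B ω) ∂Pr = χ s * (lam / (lam + ψ s) ^ 2) := by
  have hA_int := integrable_of_map_eq_expMeasure hlam hA hlaw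
  have hexp_int : Integrable (fun ω => exp (-s * B ω)) Pr := by
    simpa using (integrable_const (1 : ℝ)).mul_exp_neg_mul hB hB_nonneg hs
  calc ∫ ω, A ω * exp (-s * B ω) ∂Pr
      = ∫ ω, A ω * (χ s * exp (-(ψ s) * A ω)) ∂Pr :=
        integral_mul_eq_integral_mul_of_condExp_ae_eq hA.comap_le
          (Measurable.of_comap_le le_rfl).stronglyMeasurable
          (hA_int.mul_exp_neg_mul hB hB_nonneg hs) hexp_int hcond
    _ = χ s * ∫ x, x * exp (-(ψ s) * x) ∂Pr.map A := by
        rw [integral_map hA.aemeasurable (by fun_prop), ← integral_const_mul]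
        congr 1 with ω
        ring
    _ = χ s * (lam / (lam + ψ s) ^ 2) := by
        rw [hlaw, integral_mul_exp_neg_mul_expMeasure hlam.le (by positivity)]

end LaplaceTransform

theorem stmt9_general {Ω : Type*} [MeasurableSpace Ω] (Pr : Measure Ω) [IsProbabilityMeasure Pr]
    (lam : ℝ) (hlam : 0 < lam)
    (A B : Ω → ℝ) (hA : Measurable A)
    (hA_exp : ∀ x : ℝ, Pr {ω | A ω ≤ x} = ENNReal.ofReal (1 - Real.exp (-lam * x)))
    (hB_nonneg : ∀ᵐ ω ∂Pr, 0 ≤ B ω) (hB_int : Integrable B Pr)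
    (hAB_int : Integrable (fun ω => A ω * B ω) Pr)
    (χ ψ : ℝ → ℝ) (hχ0 : χ 0 = 1) (hψ0 : ψ 0 = 0)
    (hψ_nonneg : ∀ s : ℝ, 0 ≤ s → 0 ≤ ψ s)
    (χ' ψ' : ℝ)
    (hχd : HasDerivWithinAt χ χ' (Set.Ici 0) 0) (hψd : HasDerivWithinAt ψ ψ' (Set.Ici 0) 0)
    (h_cond : ∀ s : ℝ, 0 ≤ s →
      Pr[fun ω => Real.exp (-s * B ω) | MeasurableSpace.comap A inferInstance]
        =ᵐ[Pr] fun ω => χ s * Real.exp (-(ψ s) * A ω)) :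
    (∫ ω, A ω * B ω ∂Pr) = (2 * ψ' - lam * χ') / lam ^ 2
      ∧ (∫ ω, A ω * B ω ∂Pr) - (∫ ω, A ω ∂Pr) * (∫ ω, B ω ∂Pr) = ψ' / lam ^ 2 := by
  have hlaw := map_eq_expMeasure_of_measure_le hlam hA hA_exp
  have hA_int := integrable_of_map_eq_expMeasure hlam hA hlaw
  have hB_meas := hB_int.aestronglyMeasurable
  have hIci := uniqueDiffOn_Ici (0 : ℝ) 0 self_mem_Ici
  have hEAB := hIci.eq_deriv _
    (hasDerivWithinAt_integral_mul_exp_neg_mul hA_int hB_meas hB_nonneg hAB_int)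
    ((hasDerivWithinAt_mul_div_add_pow hχd hψd hχ0 hψ0 hlam.ne' 2).congr_of_mem
      (fun s hs => integral_mul_exp_neg_mul_eq_of_condExp hA hlaw hlam hB_meas hB_nonneg hs
        (hψ_nonneg s hs) (h_cond s hs)) self_mem_Ici)
  have hderivB :
      HasDerivWithinAt (fun s => ∫ ω, exp (-s * B ω) ∂Pr) (-∫ ω, B ω ∂Pr) (Ici 0) 0 := by
    simpa using hasDerivWithinAt_integral_mul_exp_neg_mul (integrable_const 1) hB_meas hB_nonneg
      (by simpa using hB_int)
  have hEB := hIci.eq_deriv _ hderivB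
    ((hasDerivWithinAt_mul_div_add_pow hχd hψd hχ0 hψ0 hlam.ne' 1).congr_of_mem
      (fun s hs => by
        simpa using integral_exp_neg_mul_eq_of_condExp hA hlaw hlam (hψ_nonneg s hs) (h_cond s hs))
      self_mem_Ici)
  have hEA : ∫ ω, A ω ∂Pr = lam⁻¹ := by
    rw [← integral_map (f := fun x => x) hA.aemeasurable aestronglyMeasurable_id, hlaw,
      integral_id_expMeasure hlam]
  refine ⟨by linear_combination -hEAB, ?_⟩
  rw [hEA]
  linear_combination -hEAB + lam⁻¹ * hEB

/-- If `A ~ Exp(λ)`, `B ≥ 0` has finite mean, `AB` is integrable, and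
`E[e^{-sB} | A] = χ(s) e^{-ψ(s) A}` a.s. for every `s ≥ 0`, with `χ(0) = 1`, `ψ(0) = 0`,
`χ, ψ ≥ 0` on `[0,∞)` and both differentiable at `0` (from the right), then
`E[AB] = (2ψ'(0) - λχ'(0))/λ²` and `Cov(A,B) = E[AB] - E[A]E[B] = ψ'(0)/λ²`. -/
theorem stmt9 {Ω : Type*} [MeasurableSpace Ω] (Pr : Measure Ω) [IsProbabilityMeasure Pr]
    (lam : ℝ) (hlam : 0 < lam)
    (A B : Ω → ℝ) (hA : Measurable A) (hB : Measurable B)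
    (hA_exp : ∀ x : ℝ, Pr {ω | A ω ≤ x} = ENNReal.ofReal (1 - Real.exp (-lam * x)))
    (hB_nonneg : ∀ᵐ ω ∂Pr, 0 ≤ B ω) (hB_int : Integrable B Pr)
    (hAB_int : Integrable (fun ω => A ω * B ω) Pr)
    (χ ψ : ℝ → ℝ) (hχ0 : χ 0 = 1) (hψ0 : ψ 0 = 0)
    (hχ_nonneg : ∀ s : ℝ, 0 ≤ s → 0 ≤ χ s) (hψ_nonneg : ∀ s : ℝ, 0 ≤ s → 0 ≤ ψ s)
    (χ' ψ' : ℝ)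
    (hχd : HasDerivWithinAt χ χ' (Set.Ici 0) 0) (hψd : HasDerivWithinAt ψ ψ' (Set.Ici 0) 0)
    (h_cond : ∀ s : ℝ, 0 ≤ s →
      Pr[fun ω => Real.exp (-s * B ω) | MeasurableSpace.comap A inferInstance]
        =ᵐ[Pr] fun ω => χ s * Real.exp (-(ψ s) * A ω)) :
    (∫ ω, A ω * B ω ∂Pr) = (2 * ψ' - lam * χ') / lam ^ 2
      ∧ (∫ ω, A ω * B ω ∂Pr) - (∫ ω, A ω ∂Pr) * (∫ ω, B ω ∂Pr) = ψ' / lam ^ 2 :=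
  stmt9_general Pr lam hlam A B hA hA_exp hB_nonneg hB_int hAB_int χ ψ hχ0 hψ0 hψ_nonneg χ' ψ' hχd
    hψd h_cond
end
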